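/- There is a constant D > 0 such that for every n ≥ 1 there exists a definite, purely negative 2-program P without dual clauses with |At(P)| ≤ n having at least D · 3^{n/6} stable models (the exponent n/6 is a real number). -/
import Mathlib


/-- A clause of a propositional logic program: an optional head (a definite
clause if `head = some h`, a constraint if `head = none`), a positive body
and a negative body. -/
structure LPClause (α : Type) where
  head : Option α
  pos : Finset α
  neg : Finset α
deriving DecidableEq

/-- A program is a finite set of clauses. -/
abbrev LPProgram (α : Type) := Finset (LPClause α)

/-- The atoms occurring in a clause. -/
def LPClause.atoms {α : Type} [DecidableEq α] (c : LPClause α) : Finset α :=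
  c.head.toFinset ∪ c.pos ∪ c.neg

/-- The atoms occurring in a program. -/
def LPProgram.atoms {α : Type} [DecidableEq α] (P : LPProgram α) : Finset α :=
  P.sup LPClause.atoms

/-- `N` is closed under the Horn rules of the reduct `P^M`: for every definite
clause of `P` whose negative body is disjoint from `M`, if its positive body
is contained in `N` then so is its head. -/
def ClosedUnder {α : Type} (P : LPProgram α) (M : Finset α) (N : Set α) : Prop :=
  ∀ c ∈ P, ∀ h : α, c.head = some h → (∀ b ∈ c.neg, b ∉ M) →
    (↑c.pos : Set α) ⊆ N → h ∈ N

/-- `M` is a stable model of `P`: `M` is the least set closed under the rules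
of the reduct `P^M` (i.e. `M = lm(P^M)`), and `M` satisfies every constraint
of `P`. -/
def IsStable {α : Type} (P : LPProgram α) (M : Finset α) : Prop :=
  ClosedUnder P M ↑M ∧ (∀ N : Set α, ClosedUnder P M N → ↑M ⊆ N) ∧
  ∀ c ∈ P, c.head = none → ¬(c.pos ⊆ M ∧ ∀ b ∈ c.neg, b ∉ M)

/-- `P` is a `t`-program: every clause has at most `t` literals, counting the head. -/
def IsTProgram {α : Type} (P : LPProgram α) (t : ℕ) : Prop :=
  ∀ c ∈ P, c.pos.card + c.neg.card + (c.head.elim 0 fun _ => 1) ≤ t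

/- auxiliary development -/


def baseE : List (ℕ × ℕ) :=
  [(0,2),(3,0),(4,0),(0,5),(2,1),(1,3),(1,4),(5,1),(4,2),(2,5),(3,4),(5,3)]

def mdl : Fin 3 → Finset ℕ
  | 0 => {0,1,2,3}
  | 1 => {0,1,4,5}
  | 2 => {2,3,4,5}

def mkC (k : ℕ) (p : ℕ × ℕ) : LPClause ℕ := ⟨some (6*k+p.1), ∅, {6*k+p.2}⟩

def Prog (m : ℕ) : LPProgram ℕ :=
  (Finset.range m).biUnion fun k => (baseE.map (mkC k)).toFinset

def FF (g : ℕ → Fin 3) (m : ℕ) : Finset ℕ :=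
  (Finset.range m).biUnion fun k => (mdl (g k)).image fun x => 6*k+x

lemma mem_Prog {m : ℕ} {c : LPClause ℕ} :
    c ∈ Prog m ↔ ∃ k, k < m ∧ ∃ p ∈ baseE, c = mkC k p := by
  simp [Prog, eq_comm]

lemma mem_FF {g : ℕ → Fin 3} {m a : ℕ} :
    a ∈ FF g m ↔ ∃ k, k < m ∧ ∃ x ∈ mdl (g k), a = 6*k+x := by
  simp [FF, eq_comm]

lemma baseE_lt : ∀ p ∈ baseE, p.1 < 6 ∧ p.2 < 6 := by decide
lemma mdl_lt : ∀ i : Fin 3, ∀ x ∈ mdl i, x < 6 := by decide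
lemma baseE_nodual : ∀ p ∈ baseE, (p.2, p.1) ∉ baseE := by decide
lemma mdl_closed : ∀ i : Fin 3, ∀ p ∈ baseE, p.2 ∉ mdl i → p.1 ∈ mdl i := by decide
lemma mdl_support : ∀ i : Fin 3, ∀ x ∈ mdl i, ∃ p ∈ baseE, p.1 = x ∧ p.2 ∉ mdl i := by decide
lemma mdl_inj : ∀ i j : Fin 3, mdl i = mdl j → i = j := by decide

lemma mem_FF_block {g : ℕ → Fin 3} {m k x : ℕ} (hk : k < m) (hx : x < 6) :
    6*k+x ∈ FF g m ↔ x ∈ mdl (g k) := by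
  rw [mem_FF]
  constructor
  · rintro ⟨k', hk', x', hx', he⟩
    have hx6 := mdl_lt _ _ hx'
    have : k = k' ∧ x = x' := by omega
    rw [this.1, this.2]; exact hx'
  · intro h; exact ⟨k, hk, x, h, rfl⟩

lemma stable_FF (g : ℕ → Fin 3) (m : ℕ) : IsStable (Prog m) (FF g m) := by
  refine ⟨?_, ?_, ?_⟩
  · intro c hc h hh hneg _
    obtain ⟨k, hk, p, hp, rfl⟩ := mem_Prog.mp hc
    simp only [mkC, Option.some.injEq] at hh
    obtain ⟨hp1, hp2⟩ := baseE_lt p hp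
    have hb : 6*k+p.2 ∉ FF g m := hneg (6*k+p.2) (by simp [mkC])
    rw [mem_FF_block hk hp2] at hb
    have : h ∈ FF g m := by
      rw [← hh, mem_FF_block hk hp1]
      exact mdl_closed _ _ hp hb
    exact this
  · intro N hN a ha
    rw [Finset.mem_coe, mem_FF] at ha
    obtain ⟨k, hk, x, hx, rfl⟩ := ha
    obtain ⟨p, hp, hp1, hp2⟩ := mdl_support _ _ hx
    have hc : mkC k p ∈ Prog m := mem_Prog.mpr ⟨k, hk, p, hp, rfl⟩
    have := hN _ hc (6*k+p.1) rfl ?_ ?_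
    · rwa [hp1] at this
    · intro b hb
      simp only [mkC, Finset.mem_singleton] at hb
      subst hb
      rw [mem_FF_block hk (baseE_lt p hp).2]
      exact hp2
    · intro y hy; simp [mkC] at hy
  · intro c hc hnone
    obtain ⟨k, hk, p, hp, rfl⟩ := mem_Prog.mp hc
    simp [mkC] at hnone

lemma stable_subset {m : ℕ} {M : Finset ℕ} (hM : IsStable (Prog m) M) :
    M ⊆ Finset.range (6*m) := by
  intro a ha
  have hclosed : ClosedUnder (Prog m) M {a : ℕ | a < 6*m} := by
    intro c hc h hh _ _
    obtain ⟨k, hk, p, hp, rfl⟩ := mem_Prog.mp hc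
    simp only [mkC, Option.some.injEq] at hh
    have := (baseE_lt p hp).1
    simp only [Set.mem_setOf_eq, ← hh]
    omega
  have := hM.2.1 _ hclosed ha
  simpa [Finset.mem_range] using this

lemma FF_injective (m : ℕ) :
    Function.Injective (fun f : Fin m → Fin 3 =>
      FF (fun k => if h : k < m then f ⟨k, h⟩ else 0) m) := by
  intro f f' h
  funext ⟨k, hk⟩
  apply mdl_inj
  have key : ∀ x < 6,
      (x ∈ mdl (if h : k < m then f ⟨k, h⟩ else 0) ↔
       x ∈ mdl (if h : k < m then f' ⟨k, h⟩ else 0)) := by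
    intro x hx
    rw [← mem_FF_block (g := fun k => if h : k < m then f ⟨k, h⟩ else 0) hk hx,
        ← mem_FF_block (g := fun k => if h : k < m then f' ⟨k, h⟩ else 0) hk hx]
    simp only at h
    rw [h]
  simp only [dif_pos hk] at key
  ext x
  by_cases hx : x < 6
  · exact key x hx
  · constructor <;> intro hmem <;> exact absurd (mdl_lt _ _ hmem) (by omega)

lemma count_lower (m : ℕ) :
    (3:ℕ)^m ≤ {M : Finset ℕ | IsStable (Prog m) M}.ncard := by
  set F' : (Fin m → Fin 3) → Finset ℕ :=
    fun f => FF (fun k => if h : k < m then f ⟨k, h⟩ else 0) m with hF'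
  have hinj : Function.Injective F' := FF_injective m
  have hrange : Set.range F' ⊆ {M : Finset ℕ | IsStable (Prog m) M} := by
    rintro _ ⟨f, rfl⟩
    exact stable_FF _ m
  have hfin : {M : Finset ℕ | IsStable (Prog m) M}.Finite := by
    apply Set.Finite.subset (Finset.range (6*m)).powerset.finite_toSet
    intro M hM
    simp only [Finset.coe_powerset, Set.mem_preimage, Set.mem_powerset_iff,
      Finset.coe_subset]
    exact stable_subset hM
  have h1 : (Set.range F').ncard = 3^m := by
    have : Set.range F' = ↑(Finset.univ.image F') := by
      ext M; simp
    rw [this, Set.ncard_coe_finset, Finset.card_image_of_injective _ hinj,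
      Finset.card_univ]
    simp
  calc (3:ℕ)^m = (Set.range F').ncard := h1.symm
    _ ≤ _ := Set.ncard_le_ncard hrange hfin

/-- There is a constant `D > 0` such that for every `n ≥ 1` there is a
definite, purely negative 2-program without dual clauses, with at most `n`
atoms, having at least `D * 3 ^ (n / 6)` stable models. -/
theorem stmt_18 :
    ∃ D : ℝ, 0 < D ∧ ∀ n : ℕ, 1 ≤ n → ∃ P : LPProgram ℕ,
      (∀ c ∈ P, c.head ≠ none) ∧
      (∀ c ∈ P, c.pos = ∅) ∧
      IsTProgram P 2 ∧
      (∀ a b : ℕ, a ≠ b →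
        ¬((⟨some a, ∅, {b}⟩ : LPClause ℕ) ∈ P ∧ (⟨some b, ∅, {a}⟩ : LPClause ℕ) ∈ P)) ∧
      P.atoms.card ≤ n ∧
      D * (3 : ℝ) ^ ((n : ℝ) / 6) ≤ ({M : Finset ℕ | IsStable P M}.ncard : ℝ) := by
  refine ⟨1/3, by norm_num, fun n hn => ?_⟩
  set m := n / 6 with hm
  refine ⟨Prog m, ?_, ?_, ?_, ?_, ?_, ?_⟩
  · intro c hc
    obtain ⟨k, hk, p, hp, rfl⟩ := mem_Prog.mp hc
    simp [mkC]
  · intro c hc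
    obtain ⟨k, hk, p, hp, rfl⟩ := mem_Prog.mp hc
    simp [mkC]
  · intro c hc
    obtain ⟨k, hk, p, hp, rfl⟩ := mem_Prog.mp hc
    simp [mkC]
  · rintro a b hab ⟨h1, h2⟩
    obtain ⟨k, hk, p, hp, he⟩ := mem_Prog.mp h1
    obtain ⟨k', hk', p', hp', he'⟩ := mem_Prog.mp h2
    simp only [mkC, LPClause.mk.injEq, Option.some.injEq,
      Finset.singleton_inj, true_and] at he he'
    obtain ⟨ha, hb⟩ := he
    obtain ⟨hb', ha'⟩ := he'
    obtain ⟨hp1, hp2⟩ := baseE_lt p hp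
    obtain ⟨hp1', hp2'⟩ := baseE_lt p' hp'
    have hkk : k = k' ∧ p.1 = p'.2 ∧ p.2 = p'.1 := by omega
    apply baseE_nodual p hp
    have : (p.2, p.1) = p' := by
      rw [hkk.2.1, hkk.2.2]
    rw [this]; exact hp'
  · calc (Prog m).atoms.card ≤ (Finset.range (6*m)).card := by
          apply Finset.card_le_card
          intro a ha
          simp only [LPProgram.atoms, Finset.mem_sup] at ha
          obtain ⟨c, hc, hac⟩ := ha
          obtain ⟨k, hk, p, hp, rfl⟩ := mem_Prog.mp hc
          obtain ⟨hp1, hp2⟩ := baseE_lt p hp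
          simp only [LPClause.atoms, mkC, Finset.mem_union, Finset.mem_singleton,
            Option.toFinset_some] at hac
          simp only [Finset.mem_range]
          rcases hac with (h | h) | h
          · omega
          · exact absurd h (Finset.notMem_empty a)
          · omega
      _ = 6*m := Finset.card_range _
      _ ≤ n := by omega
  · have hcount := count_lower m
    have hle : ((n : ℝ))/6 ≤ (m : ℝ) + 1 := by
      have : n < 6*(m+1) := by omega
      have : (n:ℝ) < 6*((m:ℝ)+1) := by exact_mod_cast this
      linarith
    have h3 : (3:ℝ) ^ ((n:ℝ)/6) ≤ (3:ℝ) ^ ((m:ℝ)+1) :=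
      Real.rpow_le_rpow_of_exponent_le (by norm_num) hle
    have h4 : (3:ℝ) ^ ((m:ℝ)+1) = 3 * (3:ℝ)^(m:ℕ) := by
      rw [Real.rpow_add (by norm_num), Real.rpow_one, Real.rpow_natCast]
      ring
    have h5 : ((3:ℕ)^m : ℝ) ≤ (({M : Finset ℕ | IsStable (Prog m) M}.ncard : ℕ) : ℝ) := by
      exact_mod_cast hcount
    push_cast at h5
    calc (1/3 : ℝ) * (3:ℝ) ^ ((n:ℝ)/6) ≤ (1/3) * ((3:ℝ) ^ ((m:ℝ)+1)) := by linarith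
      _ = (3:ℝ)^(m:ℕ) := by rw [h4]; ring
      _ ≤ _ := by exact_mod_cast h5
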